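/- Let F ∈ C^∞(ℝ, ℝ) and define, for f ∈ C_c^∞(ℝ), A_F f = -i(F f' + ½ F' f), and let T = p F'(q) p, i.e. T f = -(F' f')'. Then for every f ∈ C_c^∞(ℝ), the commutator [T, iA_F]f := i(T(A_F f) - A_F(T f)) satisfies [T, iA_F] f = -((2F'² - F F'') f')' - ½ (F''' F' + (F'')²) f; that is, [pF'(q)p, iA_F] = p(2F'(q)² - F(q)F''(q))p - ½(F'''(q)F'(q) + F''(q)²) on C_c^∞(ℝ). -/

import Mathlib

/-!
Both sides are evaluated pointwise as polynomials in `F, f` and their derivatives up to order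
three, using only the product rule. The third-order terms `F F' f'''` of `T(A_F f)` and
`A_F(T f)` cancel, and `i · (-i) = 1` turns what remains into the second-order operator on the
right.
-/

open MeasureTheory Complex Real

noncomputable section

/-- `A_F f = -i(F f' + ½F' f)`, i.e. `A_F = ½(pF(q) + F(q)p)` with `p = -i d/dx`. -/
def AF1 (F : ℝ → ℝ) (f : ℝ → ℂ) (x : ℝ) : ℂ :=
  -Complex.I * ((F x : ℂ) * deriv f x + (1 / 2 : ℂ) * ((deriv F x : ℝ) : ℂ) * f x)

/-- `T = pF'(q)p`, i.e. `T f = -(F' f')'`. -/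
def Tpfp (F : ℝ → ℝ) (f : ℝ → ℂ) (x : ℝ) : ℂ :=
  -deriv (fun y => ((deriv F y : ℝ) : ℂ) * deriv f y) x

section

variable {F : ℝ → ℝ} {f g : ℝ → ℂ} {x : ℝ}

theorem Tpfp_apply (hF : DifferentiableAt ℝ (deriv F) x) (hg : DifferentiableAt ℝ (deriv g) x) :
    Tpfp F g x =
      -((deriv (deriv F) x : ℝ) * deriv g x + (deriv F x : ℝ) * deriv (deriv g) x) := by
  rw [Tpfp, (hF.hasDerivAt.ofReal_comp.fun_mul hg.hasDerivAt).deriv]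

theorem hasDerivAt_Tpfp (hF₁ : Differentiable ℝ (deriv F))
    (hF₂ : DifferentiableAt ℝ (deriv (deriv F)) x) (hf₁ : Differentiable ℝ (deriv f))
    (hf₂ : DifferentiableAt ℝ (deriv (deriv f)) x) :
    HasDerivAt (Tpfp F f)
      (-((deriv (deriv (deriv F)) x : ℝ) * deriv f x
        + 2 * (deriv (deriv F) x : ℝ) * deriv (deriv f) x
        + (deriv F x : ℝ) * deriv (deriv (deriv f)) x)) x := by
  have hT : Tpfp F f = fun y =>
      -((deriv (deriv F) y : ℝ) * deriv f y + (deriv F y : ℝ) * deriv (deriv f) y) :=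
    funext fun y => Tpfp_apply (hF₁ y) (hf₁ y)
  rw [hT]
  exact (((hF₂.hasDerivAt.ofReal_comp.fun_mul (hf₁ x).hasDerivAt).fun_add
    ((hF₁ x).hasDerivAt.ofReal_comp.fun_mul hf₂.hasDerivAt)).fun_neg).congr_deriv (by ring)

theorem hasDerivAt_AF1 (hF₀ : DifferentiableAt ℝ F x) (hF₁ : DifferentiableAt ℝ (deriv F) x)
    (hf₀ : DifferentiableAt ℝ f x) (hf₁ : DifferentiableAt ℝ (deriv f) x) :
    HasDerivAt (AF1 F f)
      (-I * ((F x : ℂ) * deriv (deriv f) x + 3 / 2 * (deriv F x : ℝ) * deriv f x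
        + 1 / 2 * (deriv (deriv F) x : ℝ) * f x)) x :=
  (((hF₀.hasDerivAt.ofReal_comp.fun_mul hf₁.hasDerivAt).fun_add
    ((hF₁.hasDerivAt.ofReal_comp.const_mul (1 / 2 : ℂ)).fun_mul hf₀.hasDerivAt)).const_mul
    (-I)).congr_deriv (by ring)

theorem hasDerivAt_deriv_AF1 (hF₀ : Differentiable ℝ F) (hF₁ : Differentiable ℝ (deriv F))
    (hF₂ : DifferentiableAt ℝ (deriv (deriv F)) x) (hf₀ : Differentiable ℝ f)
    (hf₁ : Differentiable ℝ (deriv f)) (hf₂ : DifferentiableAt ℝ (deriv (deriv f)) x) :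
    HasDerivAt (deriv (AF1 F f))
      (-I * ((F x : ℂ) * deriv (deriv (deriv f)) x
        + 5 / 2 * (deriv F x : ℝ) * deriv (deriv f) x
        + 2 * (deriv (deriv F) x : ℝ) * deriv f x
        + 1 / 2 * (deriv (deriv (deriv F)) x : ℝ) * f x)) x := by
  have hA : deriv (AF1 F f) = fun y =>
      -I * ((F y : ℂ) * deriv (deriv f) y + 3 / 2 * (deriv F y : ℝ) * deriv f y
        + 1 / 2 * (deriv (deriv F) y : ℝ) * f y) :=
    funext fun y => (hasDerivAt_AF1 (hF₀ y) (hF₁ y) (hf₀ y) (hf₁ y)).deriv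
  rw [hA]
  exact (((((hF₀ x).hasDerivAt.ofReal_comp.fun_mul hf₂.hasDerivAt).fun_add
    (((hF₁ x).hasDerivAt.ofReal_comp.const_mul (3 / 2 : ℂ)).fun_mul (hf₁ x).hasDerivAt)).fun_add
    ((hF₂.hasDerivAt.ofReal_comp.const_mul (1 / 2 : ℂ)).fun_mul (hf₀ x).hasDerivAt)).const_mul
    (-I)).congr_deriv (by ring)

end

theorem statement17_general (F : ℝ → ℝ) (hF : ContDiff ℝ (⊤ : ℕ∞) F)
    (f : ℝ → ℂ) (hf : ContDiff ℝ (⊤ : ℕ∞) f) (x : ℝ) :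
    Complex.I * (Tpfp F (AF1 F f) x - AF1 F (Tpfp F f) x) =
      -deriv (fun y =>
          ((2 * (deriv F y) ^ 2 - F y * deriv (deriv F) y : ℝ) : ℂ) * deriv f y) x -
        (1 / 2 : ℂ) *
          ((deriv (deriv (deriv F)) x * deriv F x + (deriv (deriv F) x) ^ 2 : ℝ) : ℂ) *
          f x := by
  obtain ⟨hF₀, hF'⟩ := contDiff_infty_iff_deriv.mp hF
  obtain ⟨hF₁, hF''⟩ := contDiff_infty_iff_deriv.mp hF'
  have hF₂ : Differentiable ℝ (deriv (deriv F)) := hF''.differentiable (by simp)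
  obtain ⟨hf₀, hf'⟩ := contDiff_infty_iff_deriv.mp hf
  obtain ⟨hf₁, hf''⟩ := contDiff_infty_iff_deriv.mp hf'
  have hf₂ : Differentiable ℝ (deriv (deriv f)) := hf''.differentiable (by simp)
  have hA' := hasDerivAt_deriv_AF1 hF₀ hF₁ (hF₂ x) hf₀ hf₁ (hf₂ x)
  have hG : HasDerivAt (fun y => 2 * deriv F y ^ 2 - F y * deriv (deriv F) y)
      (3 * deriv F x * deriv (deriv F) x - F x * deriv (deriv (deriv F)) x) x :=
    ((((hF₁ x).hasDerivAt.fun_pow 2).const_mul (2 : ℝ)).fun_sub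
      ((hF₀ x).hasDerivAt.fun_mul (hF₂ x).hasDerivAt)).congr_deriv (by ring)
  rw [Tpfp_apply (hF₁ x) hA'.differentiableAt, hA'.deriv,
    (hasDerivAt_AF1 (hF₀ x) (hF₁ x) (hf₀ x) (hf₁ x)).deriv, AF1,
    (hasDerivAt_Tpfp hF₁ (hF₂ x) hf₁ (hf₂ x)).deriv, Tpfp_apply (hF₁ x) (hf₁ x),
    (hG.ofReal_comp.fun_mul (hf₁ x).hasDerivAt).deriv]
  push_cast
  ring_nf
  rw [I_sq]
  ring

/-- for `F ∈ C^∞(ℝ,ℝ)` and `f ∈ C_c^∞(ℝ)`, the iterated commutator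
`[pF'(q)p, iA_F]f = i(T(A_F f) - A_F(Tf))` equals
`-((2F'² - FF'')f')' - ½(F'''F' + (F'')²)f`, i.e.
`[pF'(q)p, iA_F] = p(2F'(q)² - F(q)F''(q))p - ½(F'''(q)F'(q) + F''(q)²)` on `C_c^∞(ℝ)`. -/
theorem statement17 (F : ℝ → ℝ) (hF : ContDiff ℝ (⊤ : ℕ∞) F)
    (f : ℝ → ℂ) (hf : ContDiff ℝ (⊤ : ℕ∞) f) (hsupp : HasCompactSupport f) (x : ℝ) :
    Complex.I * (Tpfp F (AF1 F f) x - AF1 F (Tpfp F f) x) =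
      -deriv (fun y =>
          ((2 * (deriv F y) ^ 2 - F y * deriv (deriv F) y : ℝ) : ℂ) * deriv f y) x -
        (1 / 2 : ℂ) *
          ((deriv (deriv (deriv F)) x * deriv F x + (deriv (deriv F) x) ^ 2 : ℝ) : ℂ) *
          f x :=
  statement17_general F hF f hf x
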